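/- Let U ∈ ℝ^{n×n} be orthogonal (UᵀU = I), let Λ = diag(τ₁,…,τ_n) with all τ_i ≥ 0, let α ≥ 0, let B, E ∈ ℝ^{n×p}, and set X = UB + E. Let Θ ∈ ℝ^{p×p} be symmetric positive definite and suppose: (i) Θ is diagonally dominant with ratio ρ, i.e., Σ_{j'≠j}|Θ_{j'j}| ≤ ρ·Θ_{jj} for all j with 0 ≤ ρ < 1, and (ii) there is k̄ ≥ 1 with 1/k̄ ≤ Θ_{jj} ≤ k̄ for all j. Let B̂₁ be the unique minimizer of B' ↦ tr((X − UB')ᵀ(X − UB')) + α·tr(B'ᵀΛB'), let B̂₂ be the unique minimizer of B' ↦ tr(Θ(X − UB')ᵀ(X − UB')) + α·tr(B'ᵀΛB'), and set W₁ = B − B̂₁ and W₂ = B − B̂₂. If W₂ ≠ 0, then there exists a matrix W̃ ∈ ℝ^{n×p} such that (1 − ρ)/k̄ ≤ ‖W̃‖_∞/‖W₂‖_∞ ≤ (1 + ρ)·k̄ and W̃ − W₁ = (I + αΛ)^{−1}UᵀE(I − Θ). -/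

import Mathlib

open Matrix Finset

/-- The maximum absolute entry norm `‖M‖_∞ = max_{ij} |M_{ij}|` of a matrix. -/
noncomputable def maxAbsEntry {n p : ℕ} (M : Matrix (Fin n) (Fin p) ℝ) : ℝ :=
  ⨆ i, ⨆ j, |M i j|

/-!
Both estimators satisfy normal equations: perturbing a minimiser along `t • G`, with `G` the
negative half-gradient, changes the objective by `-2 t ‖G‖² + O(t²)`, so `G = 0`. Using `Uᵀ U = 1`
and writing `Λ = diagonal τ`, they read `(1 + αΛ) W₁ = αΛB - UᵀE` and
`W₂ Θ + αΛ W₂ = αΛB - UᵀE Θ`, so `W̃ = (1 + αΛ)⁻¹ (W₂ Θ + αΛ W₂)` has the required difference with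
`W₁`. Since `1 + αΛ` is diagonal, `W̃ᵢⱼ = ((W₂ Θ)ᵢⱼ + ατᵢ W₂ᵢⱼ) / (1 + ατᵢ)`. Column diagonal
dominance bounds `|(W₂ Θ)ᵢⱼ|` by `(1 + ρ) Θⱼⱼ ‖W₂‖_∞` everywhere, and from below by
`(1 - ρ) Θⱼⱼ ‖W₂‖_∞` plus the diagonal term at an entry where `|W₂ᵢⱼ|` is maximal; the bounds
`1/k̄ ≤ Θⱼⱼ ≤ k̄` then give both ratio bounds.
-/

lemma eq_zero_of_forall_nonneg_mul_add_mul_sq {a b : ℝ} (h : ∀ t : ℝ, 0 ≤ a * t + b * t ^ 2) :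
    a = 0 := by
  have hmin : IsLocalMin (fun t : ℝ => a * t + b * t ^ 2) 0 :=
    Filter.Eventually.of_forall fun t => by simpa using h t
  have hderiv : HasDerivAt (fun t : ℝ => a * t + b * t ^ 2) a 0 := by
    have := ((hasDerivAt_id (0 : ℝ)).const_mul a).add ((hasDerivAt_pow 2 (0 : ℝ)).const_mul b)
    simp only [id_eq, mul_one, Nat.cast_ofNat, Nat.add_one_sub_one, pow_one, mul_zero,
      add_zero] at this
    exact this
  exact hmin.hasDerivAt_eq_zero hderiv

section Ridge

variable {m r c : Type*} [Fintype m] [Fintype r] [Fintype c]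
  (U : Matrix m r ℝ) (X : Matrix m c ℝ) (Θ : Matrix c c ℝ) (Λ : Matrix r r ℝ) (α : ℝ)

def ridgeObjective (B : Matrix r c ℝ) : ℝ :=
  (Θ * (X - U * B)ᵀ * (X - U * B)).trace + α * (Bᵀ * Λ * B).trace

/-- `-½` times the gradient of `ridgeObjective` at `B`. -/
def ridgeGradient (B : Matrix r c ℝ) : Matrix r c ℝ :=
  Uᵀ * (X - U * B) * Θ - α • (Λ * B)

variable {Θ Λ}

lemma ridgeObjective_add_smul (hΘ : Θᵀ = Θ) (hΛ : Λᵀ = Λ) (B D : Matrix r c ℝ) (t : ℝ) :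
    ridgeObjective U X Θ Λ α (B + t • D)
      = ridgeObjective U X Θ Λ α B - 2 * (Dᵀ * ridgeGradient U X Θ Λ α B).trace * t
        + ridgeObjective U 0 Θ Λ α D * t ^ 2 := by
  have hR : X - U * (B + t • D) = X - U * B - t • (U * D) := by
    rw [Matrix.mul_add, Matrix.mul_smul, sub_add_eq_sub_sub]
  unfold ridgeObjective ridgeGradient
  rw [hR]
  generalize X - U * B = R
  have h₁ : (Θ * (U * D)ᵀ * R).trace = (Dᵀ * (Uᵀ * R * Θ)).trace := by
    rw [Matrix.transpose_mul, Matrix.mul_assoc, trace_mul_comm]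
    simp only [Matrix.mul_assoc]
  have h₂ : (Θ * Rᵀ * (U * D)).trace = (Dᵀ * (Uᵀ * R * Θ)).trace := by
    rw [← Matrix.trace_transpose]
    simp only [Matrix.transpose_mul, Matrix.transpose_transpose, hΘ, Matrix.mul_assoc]
  have h₃ : (Bᵀ * Λ * D).trace = (Dᵀ * (Λ * B)).trace := by
    rw [← Matrix.trace_transpose]
    simp only [Matrix.transpose_mul, Matrix.transpose_transpose, hΛ, Matrix.mul_assoc]
  simp only [zero_sub, Matrix.transpose_neg, Matrix.neg_mul, Matrix.mul_neg, neg_neg,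
    Matrix.transpose_sub, Matrix.transpose_smul, Matrix.transpose_add,
    Matrix.mul_sub, Matrix.sub_mul, Matrix.mul_add, Matrix.add_mul, Matrix.smul_mul,
    Matrix.mul_smul, Matrix.trace_sub, Matrix.trace_add, Matrix.trace_smul, smul_eq_mul]
  rw [h₁, h₂, h₃, Matrix.mul_assoc Dᵀ Λ B]
  ring

lemma ridgeGradient_eq_zero_of_forall_le (hΘ : Θᵀ = Θ) (hΛ : Λᵀ = Λ) {B : Matrix r c ℝ}
    (hB : ∀ B', ridgeObjective U X Θ Λ α B ≤ ridgeObjective U X Θ Λ α B') :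
    ridgeGradient U X Θ Λ α B = 0 := by
  set G := ridgeGradient U X Θ Λ α B
  have hquad : ∀ t : ℝ, 0 ≤ -2 * (Gᵀ * G).trace * t + ridgeObjective U 0 Θ Λ α G * t ^ 2 := by
    intro t
    have := hB (B + t • G)
    rw [ridgeObjective_add_smul U X α hΘ hΛ] at this
    linarith
  have htrace : (Gᵀ * G).trace = 0 := by
    linarith [eq_zero_of_forall_nonneg_mul_add_mul_sq hquad]
  rwa [← conjTranspose_eq_transpose_of_trivial, trace_conjTranspose_mul_self_eq_zero_iff] at htrace

lemma sub_mul_add_smul_eq_of_ridgeGradient_eq_zero [DecidableEq r] (E : Matrix m c ℝ)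
    {B Bh : Matrix r c ℝ} (hU : Uᵀ * U = 1) (h : ridgeGradient U (U * B + E) Θ Λ α Bh = 0) :
    (B - Bh) * Θ + α • (Λ * (B - Bh)) = α • (Λ * B) - Uᵀ * E * Θ := by
  have hres : Uᵀ * (U * B + E - U * Bh) = B - Bh + Uᵀ * E := by
    simp only [Matrix.mul_sub, Matrix.mul_add, ← Matrix.mul_assoc, hU, Matrix.one_mul]
    abel
  rw [ridgeGradient, hres, Matrix.add_mul, sub_eq_zero] at h
  rw [Matrix.mul_sub, smul_sub, ← h]
  abel

end Ridge

section Diagonal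
variable {n : Type*} [DecidableEq n] {α : ℝ} {τ : n → ℝ}

lemma one_add_smul_diagonal :
    (1 : Matrix n n ℝ) + α • diagonal τ = diagonal fun i => 1 + α * τ i := by
  rw [← diagonal_one, ← diagonal_smul, diagonal_add]; rfl

variable [Fintype n]

lemma isUnit_det_one_add_smul_diagonal (hα : 0 ≤ α) (hτ : ∀ i, 0 ≤ τ i) :
    IsUnit ((1 : Matrix n n ℝ) + α • diagonal τ).det := by
  rw [one_add_smul_diagonal, det_diagonal, isUnit_iff_ne_zero]
  exact prod_ne_zero_iff.mpr fun i _ =>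
    (add_pos_of_pos_of_nonneg one_pos (mul_nonneg hα (hτ i))).ne'

lemma inv_one_add_smul_diagonal_mul_apply {m : Type*} (hα : 0 ≤ α) (hτ : ∀ i, 0 ≤ τ i)
    (N : Matrix n m ℝ) (i : n) (j : m) :
    (((1 : Matrix n n ℝ) + α • diagonal τ)⁻¹ * N) i j = N i j / (1 + α * τ i) := by
  have hinv : ((1 : Matrix n n ℝ) + α • diagonal τ)⁻¹ = diagonal fun i => (1 + α * τ i)⁻¹ := by
    rw [one_add_smul_diagonal]
    refine inv_eq_left_inv ?_
    rw [diagonal_mul_diagonal, ← diagonal_one]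
    exact congrArg diagonal <| funext fun i =>
      inv_mul_cancel₀ (add_pos_of_pos_of_nonneg one_pos (mul_nonneg hα (hτ i))).ne'
  rw [hinv, diagonal_mul, div_eq_inv_mul]

end Diagonal

section MaxAbsEntry
variable {n p : ℕ} (M : Matrix (Fin n) (Fin p) ℝ)

lemma abs_le_maxAbsEntry (i : Fin n) (j : Fin p) : |M i j| ≤ maxAbsEntry M :=
  (le_ciSup (Set.finite_range _).bddAbove j).trans
    (le_ciSup (f := fun i => ⨆ j, |M i j|) (Set.finite_range _).bddAbove i)

lemma maxAbsEntry_nonneg : 0 ≤ maxAbsEntry M :=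
  Real.iSup_nonneg fun i => Real.iSup_nonneg fun j => abs_nonneg (M i j)

lemma maxAbsEntry_le {c : ℝ} (hc : 0 ≤ c) (h : ∀ i j, |M i j| ≤ c) : maxAbsEntry M ≤ c :=
  Real.iSup_le (fun i => Real.iSup_le (h i) hc) hc

lemma exists_abs_eq_maxAbsEntry (hM : M ≠ 0) : ∃ i j, |M i j| = maxAbsEntry M := by
  obtain ⟨i, hi⟩ := Function.ne_iff.mp hM
  obtain ⟨j, -⟩ := Function.ne_iff.mp hi
  have : Nonempty (Fin n) := ⟨i⟩
  have : Nonempty (Fin p) := ⟨j⟩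
  obtain ⟨⟨i₀, j₀⟩, hmax⟩ := Finite.exists_max fun q : Fin n × Fin p => |M q.1 q.2|
  exact ⟨i₀, j₀, le_antisymm (abs_le_maxAbsEntry M i₀ j₀)
    (maxAbsEntry_le M (abs_nonneg _) fun i j => hmax (i, j))⟩

lemma maxAbsEntry_pos (hM : M ≠ 0) : 0 < maxAbsEntry M := by
  obtain ⟨i, hi⟩ := Function.ne_iff.mp hM
  obtain ⟨j, hij⟩ := Function.ne_iff.mp hi
  exact (abs_pos.mpr hij).trans_le (abs_le_maxAbsEntry M i j)

lemma abs_sum_mul_le_maxAbsEntry_mul {q : ℕ} (Θ : Matrix (Fin p) (Fin q) ℝ) (S : Finset (Fin p))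
    (i : Fin n) (j : Fin q) :
    |∑ k ∈ S, M i k * Θ k j| ≤ maxAbsEntry M * ∑ k ∈ S, |Θ k j| := by
  rw [mul_sum]
  refine (abs_sum_le_sum_abs _ _).trans (sum_le_sum fun k _ => ?_)
  rw [abs_mul]
  exact mul_le_mul_of_nonneg_right (abs_le_maxAbsEntry M i k) (abs_nonneg _)

end MaxAbsEntry

def DiagDominantWithRatio {p : Type*} [Fintype p] [DecidableEq p] (Θ : Matrix p p ℝ) (ρ : ℝ) :
    Prop :=
  ∀ j, ∑ j' ∈ univ.erase j, |Θ j' j| ≤ ρ * Θ j j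

section DiagonallyDominant

variable {n p : ℕ} {Θ : Matrix (Fin p) (Fin p) ℝ} {ρ κ : ℝ} (W : Matrix (Fin n) (Fin p) ℝ) {r : ℝ}
  (i : Fin n) (j : Fin p)

lemma abs_mul_apply_add_le (hdom : DiagDominantWithRatio Θ ρ) (hr : 0 ≤ r)
    (hρ : 0 ≤ ρ) (hκ : 1 ≤ κ) (hΘ₀ : 0 ≤ Θ j j) (hΘκ : Θ j j ≤ κ) :
    |(W * Θ) i j + r * W i j| ≤ (1 + r) * ((1 + ρ) * κ * maxAbsEntry W) := by
  have hs := (abs_nonneg _).trans (abs_le_maxAbsEntry W i j)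
  have hcol : ∑ k, |Θ k j| ≤ (1 + ρ) * κ := by
    rw [← add_sum_erase _ _ (mem_univ j), abs_of_nonneg hΘ₀]
    nlinarith [hdom j]
  have hWΘ : |(W * Θ) i j| ≤ (1 + ρ) * κ * maxAbsEntry W := by
    calc |(W * Θ) i j| ≤ maxAbsEntry W * ∑ k, |Θ k j| := by
          rw [mul_apply]; exact abs_sum_mul_le_maxAbsEntry_mul W Θ _ i j
      _ ≤ (1 + ρ) * κ * maxAbsEntry W := by rw [mul_comm]; gcongr
  have hrW : |r * W i j| ≤ r * ((1 + ρ) * κ * maxAbsEntry W) := by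
    rw [abs_mul, abs_of_nonneg hr]
    gcongr
    exact (abs_le_maxAbsEntry W i j).trans (le_mul_of_one_le_left hs (by nlinarith))
  linarith [abs_add_le ((W * Θ) i j) (r * W i j)]

lemma le_abs_mul_apply_add (hdom : DiagDominantWithRatio Θ ρ) (hr : 0 ≤ r)
    (hρ₀ : 0 ≤ ρ) (hρ₁ : ρ ≤ 1) (hκ : 1 ≤ κ) (hΘκ : 1 / κ ≤ Θ j j)
    (hmax : |W i j| = maxAbsEntry W) :
    (1 + r) * ((1 - ρ) / κ * maxAbsEntry W) ≤ |(W * Θ) i j + r * W i j| := by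
  have hs : 0 ≤ maxAbsEntry W := hmax ▸ abs_nonneg _
  have hsplit : (W * Θ) i j + r * W i j
      = W i j * (Θ j j + r) + ∑ k ∈ univ.erase j, W i k * Θ k j := by
    rw [mul_apply, ← add_sum_erase _ _ (mem_univ j)]; ring
  have hoff := (abs_sum_mul_le_maxAbsEntry_mul W Θ (univ.erase j) i j).trans
    (mul_le_mul_of_nonneg_left (hdom j) hs)
  have hκ₀ : 0 < κ := one_pos.trans_le hκ
  have hΘ₀ : 0 < Θ j j := (one_div_pos.mpr hκ₀).trans_le hΘκ
  have hdiag : |W i j * (Θ j j + r)| = maxAbsEntry W * (Θ j j + r) := by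
    rw [abs_mul, hmax, abs_of_pos (by linarith)]
  have hshrink : (1 - ρ) / κ ≤ (1 - ρ) * Θ j j := by
    rw [div_eq_mul_one_div]; exact mul_le_mul_of_nonneg_left hΘκ (by linarith)
  have hle_one : (1 - ρ) / κ ≤ 1 := (div_le_one hκ₀).mpr (by linarith)
  rw [hsplit]
  refine le_trans ?_ (abs_sub_abs_le_abs_add _ _)
  rw [hdiag]
  nlinarith [mul_le_mul_of_nonneg_left hle_one hr]

end DiagonallyDominant

/-- Applied to the weighted error `W₂`, this is the error the unweighted estimator would have if
its noise `Uᵀ * E` were replaced by `Uᵀ * E * Θ`. -/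
noncomputable def ridgeTransform {n p : ℕ} (α : ℝ) (τ : Fin n → ℝ) (Θ : Matrix (Fin p) (Fin p) ℝ)
    (W : Matrix (Fin n) (Fin p) ℝ) : Matrix (Fin n) (Fin p) ℝ :=
  ((1 : Matrix (Fin n) (Fin n) ℝ) + α • diagonal τ)⁻¹ * (W * Θ + α • (diagonal τ * W))

section RidgeTransform

variable {n p : ℕ} {Θ : Matrix (Fin p) (Fin p) ℝ} {ρ κ α : ℝ} {τ : Fin n → ℝ}
  (W : Matrix (Fin n) (Fin p) ℝ)

lemma ridgeTransform_apply (hα : 0 ≤ α) (hτ : ∀ i, 0 ≤ τ i) (i : Fin n) (j : Fin p) :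
    ridgeTransform α τ Θ W i j = ((W * Θ) i j + α * τ i * W i j) / (1 + α * τ i) := by
  rw [ridgeTransform, inv_one_add_smul_diagonal_mul_apply hα hτ, Matrix.add_apply,
    Matrix.smul_apply, diagonal_mul, smul_eq_mul, mul_assoc]

lemma maxAbsEntry_ridgeTransform_le (hdom : DiagDominantWithRatio Θ ρ) (hα : 0 ≤ α)
    (hτ : ∀ i, 0 ≤ τ i) (hρ : 0 ≤ ρ) (hκ : 1 ≤ κ) (hΘ₀ : ∀ j, 0 ≤ Θ j j) (hΘκ : ∀ j, Θ j j ≤ κ) :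
    maxAbsEntry (ridgeTransform α τ Θ W) ≤ (1 + ρ) * κ * maxAbsEntry W := by
  have hκ₀ : 0 ≤ κ := zero_le_one.trans hκ
  refine maxAbsEntry_le _ (by have := maxAbsEntry_nonneg W; positivity) fun i j => ?_
  have hd : 0 < 1 + α * τ i := add_pos_of_pos_of_nonneg one_pos (mul_nonneg hα (hτ i))
  rw [ridgeTransform_apply W hα hτ, abs_div, abs_of_pos hd, div_le_iff₀ hd]
  exact (abs_mul_apply_add_le W i j hdom (mul_nonneg hα (hτ i)) hρ hκ (hΘ₀ j) (hΘκ j)).trans_eq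
    (mul_comm _ _)

lemma le_maxAbsEntry_ridgeTransform (hdom : DiagDominantWithRatio Θ ρ) (hα : 0 ≤ α)
    (hτ : ∀ i, 0 ≤ τ i) (hρ₀ : 0 ≤ ρ) (hρ₁ : ρ ≤ 1) (hκ : 1 ≤ κ) (hΘκ : ∀ j, 1 / κ ≤ Θ j j)
    (hW : W ≠ 0) :
    (1 - ρ) / κ * maxAbsEntry W ≤ maxAbsEntry (ridgeTransform α τ Θ W) := by
  obtain ⟨i, j, hmax⟩ := exists_abs_eq_maxAbsEntry W hW
  have hd : 0 < 1 + α * τ i := add_pos_of_pos_of_nonneg one_pos (mul_nonneg hα (hτ i))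
  refine le_trans ?_ (abs_le_maxAbsEntry _ i j)
  rw [ridgeTransform_apply W hα hτ, abs_div, abs_of_pos hd, le_div_iff₀ hd]
  exact (mul_comm _ _).trans_le
    (le_abs_mul_apply_add W i j hdom (mul_nonneg hα (hτ i)) hρ₀ hρ₁ hκ (hΘκ j) hmax)

end RidgeTransform

theorem oracle_mean_estimation
    (n p : ℕ) (U : Matrix (Fin n) (Fin n) ℝ) (hU : Uᵀ * U = 1)
    (τ : Fin n → ℝ) (hτ : ∀ i, 0 ≤ τ i) (α : ℝ) (hα : 0 ≤ α)
    (B E : Matrix (Fin n) (Fin p) ℝ)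
    (Θ : Matrix (Fin p) (Fin p) ℝ) (hΘ : Θ.PosDef)
    (ρ : ℝ) (hρ₀ : 0 ≤ ρ) (hρ₁ : ρ < 1)
    (hdom : ∀ j, ∑ j' ∈ Finset.univ.erase j, |Θ j' j| ≤ ρ * Θ j j)
    (kbar : ℝ) (hkbar : 1 ≤ kbar) (hdiag : ∀ j, 1 / kbar ≤ Θ j j ∧ Θ j j ≤ kbar)
    (Bhat₁ Bhat₂ : Matrix (Fin n) (Fin p) ℝ)
    (hBhat₁ : ∀ B' : Matrix (Fin n) (Fin p) ℝ,
      (((U * B + E) - U * Bhat₁)ᵀ * ((U * B + E) - U * Bhat₁)).trace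
          + α * (Bhat₁ᵀ * Matrix.diagonal τ * Bhat₁).trace
        ≤ (((U * B + E) - U * B')ᵀ * ((U * B + E) - U * B')).trace
          + α * (B'ᵀ * Matrix.diagonal τ * B').trace)
    (hBhat₂ : ∀ B' : Matrix (Fin n) (Fin p) ℝ,
      (Θ * ((U * B + E) - U * Bhat₂)ᵀ * ((U * B + E) - U * Bhat₂)).trace
          + α * (Bhat₂ᵀ * Matrix.diagonal τ * Bhat₂).trace
        ≤ (Θ * ((U * B + E) - U * B')ᵀ * ((U * B + E) - U * B')).trace
          + α * (B'ᵀ * Matrix.diagonal τ * B').trace)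
    (hW₂ : B - Bhat₂ ≠ 0) :
    ∃ Wtil : Matrix (Fin n) (Fin p) ℝ,
      (1 - ρ) / kbar ≤ maxAbsEntry Wtil / maxAbsEntry (B - Bhat₂) ∧
      maxAbsEntry Wtil / maxAbsEntry (B - Bhat₂) ≤ (1 + ρ) * kbar ∧
      Wtil - (B - Bhat₁)
        = ((1 : Matrix (Fin n) (Fin n) ℝ) + α • Matrix.diagonal τ)⁻¹
            * (Uᵀ * E * ((1 : Matrix (Fin p) (Fin p) ℝ) - Θ)) := by
  have hΘsymm : Θᵀ = Θ := hΘ.isHermitian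
  have hΛ : (diagonal τ)ᵀ = diagonal τ := diagonal_transpose τ
  have h₁ : (1 + α • diagonal τ) * (B - Bhat₁) = α • (diagonal τ * B) - Uᵀ * E := by
    have hmin : ∀ B', ridgeObjective U (U * B + E) 1 (diagonal τ) α Bhat₁
        ≤ ridgeObjective U (U * B + E) 1 (diagonal τ) α B' := by
      simpa only [ridgeObjective, Matrix.one_mul] using hBhat₁
    have := sub_mul_add_smul_eq_of_ridgeGradient_eq_zero U α E hU
      (ridgeGradient_eq_zero_of_forall_le U _ α transpose_one hΛ hmin)
    rw [Matrix.add_mul, Matrix.one_mul, Matrix.smul_mul]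
    simpa only [Matrix.mul_one] using this
  have h₂ := sub_mul_add_smul_eq_of_ridgeGradient_eq_zero U α E hU
    (ridgeGradient_eq_zero_of_forall_le U _ α hΘsymm hΛ hBhat₂)
  have hs := maxAbsEntry_pos _ hW₂
  refine ⟨ridgeTransform α τ Θ (B - Bhat₂), ?_, ?_, ?_⟩
  · rw [le_div_iff₀ hs]
    exact le_maxAbsEntry_ridgeTransform _ hdom hα hτ hρ₀ hρ₁.le hkbar (fun j => (hdiag j).1) hW₂
  · rw [div_le_iff₀ hs]
    exact maxAbsEntry_ridgeTransform_le _ hdom hα hτ hρ₀ hkbar (fun j => hΘ.diag_pos.le)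
      (fun j => (hdiag j).2)
  · rw [ridgeTransform, h₂,
      ← nonsing_inv_mul_cancel_left _ (B - Bhat₁) (isUnit_det_one_add_smul_diagonal hα hτ), h₁, ← Matrix.mul_sub, Matrix.mul_sub _ 1 Θ, Matrix.mul_one]
    congr 1
    abel
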